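/- Let λ be an atomless Borel probability measure on [0,1] and let 0 ≤ a ≤ b ≤ 1. Then (Vλ)([a,b]) = λ([a,b])·( λ([a,b]) + 2q·λ([0,a)) + 2p·λ((b,1]) ). -/

import Mathlib

open MeasureTheory Set Filter Topology ENNReal

/-- The unit interval `[0,1]` as a measurable space (with the Borel σ-algebra). -/
abbrev UnitInt : Type := ↥(Set.Icc (0:ℝ) 1)

/-- The family of measures `P(x,y,·)`: `p·δ_x + q·δ_y` if `x < y`, `δ_x` if `x = y`,
and `p·δ_y + q·δ_x` if `x > y`. -/
noncomputable def Pker (p q : ℝ) (x y : UnitInt) : Measure UnitInt :=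
  if x < y then ENNReal.ofReal p • Measure.dirac x + ENNReal.ofReal q • Measure.dirac y
  else if y < x then ENNReal.ofReal p • Measure.dirac y + ENNReal.ofReal q • Measure.dirac x
  else Measure.dirac x

/-!
Since `δ_x = p·δ_x + q·δ_x` when `p + q = 1`, the kernel is
`P(x,y,·) = p·δ_{min(x,y)} + q·δ_{max(x,y)}` for all `x, y`. For fixed `x`, the set of `y` with
`min(x,y) ∈ [a,b]` is empty, `[a,1]` or `[a,b]` according as `x < a`, `x ∈ [a,b]` or `x > b`;
integrating in `x` gives `λ([a,b])·(λ([a,b]) + 2λ((b,1]))`, and symmetrically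
`λ([a,b])·(λ([a,b]) + 2λ([0,a)))` for `max`.
-/

section LinearOrder

variable {α : Type*} [LinearOrder α] [MeasurableSpace α] (μ : Measure α) {a b : α}

theorem measure_setOf_min_mem_Icc (hab : a ≤ b) (x : α) :
    μ {y | min x y ∈ Icc a b}
      = (Icc a b).indicator (fun _ => μ (Ici a)) x
        + (Ioi b).indicator (fun _ => μ (Icc a b)) x := by
  rcases lt_or_ge x a with hxa | hax
  · have hset : {y | min x y ∈ Icc a b} = ∅ := by ext y; grind
    rw [hset]
    simp [not_le.2 hxa, (hxa.trans_le hab).le]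
  rcases le_or_gt x b with hxb | hbx
  · have hset : {y | min x y ∈ Icc a b} = Ici a := by ext y; grind
    rw [hset]
    simp [hax, hxb, not_lt.2 hxb]
  · have hset : {y | min x y ∈ Icc a b} = Icc a b := by ext y; grind
    rw [hset]
    simp [hbx, not_le.2 hbx]

theorem measure_setOf_max_mem_Icc (hab : a ≤ b) (x : α) :
    μ {y | max x y ∈ Icc a b}
      = (Iio a).indicator (fun _ => μ (Icc a b)) x
        + (Icc a b).indicator (fun _ => μ (Iic b)) x := by
  rcases lt_or_ge x a with hxa | hax
  · have hset : {y | max x y ∈ Icc a b} = Icc a b := by ext y; grind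
    rw [hset]
    simp [hxa, not_le.2 hxa]
  rcases le_or_gt x b with hxb | hbx
  · have hset : {y | max x y ∈ Icc a b} = Iic b := by ext y; grind
    rw [hset]
    simp [hax, hxb, not_lt.2 hax]
  · have hset : {y | max x y ∈ Icc a b} = ∅ := by ext y; grind
    rw [hset]
    simp [not_le.2 hbx, not_lt.2 (hab.trans hbx.le)]

variable [TopologicalSpace α] [OrderClosedTopology α] [OpensMeasurableSpace α]

theorem lintegral_measure_setOf_min_mem_Icc (hab : a ≤ b) :
    ∫⁻ x, μ {y | min x y ∈ Icc a b} ∂μ = μ (Icc a b) * (μ (Icc a b) + 2 * μ (Ioi b)) := by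
  have hIci : μ (Ici a) = μ (Icc a b) + μ (Ioi b) := by
    rw [← Icc_union_Ioi_eq_Ici hab,
      measure_union ((Iic_disjoint_Ioi le_rfl).mono_left Icc_subset_Iic_self) measurableSet_Ioi]
  simp_rw [measure_setOf_min_mem_Icc μ hab]
  rw [lintegral_add_left (measurable_const.indicator measurableSet_Icc),
    lintegral_indicator_const measurableSet_Icc, lintegral_indicator_const measurableSet_Ioi, hIci]
  ring

theorem lintegral_measure_setOf_max_mem_Icc (hab : a ≤ b) :
    ∫⁻ x, μ {y | max x y ∈ Icc a b} ∂μ = μ (Icc a b) * (μ (Icc a b) + 2 * μ (Iio a)) := by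
  have hIic : μ (Iic b) = μ (Iio a) + μ (Icc a b) := by
    rw [← Iio_union_Icc_eq_Iic hab,
      measure_union ((Iio_disjoint_Ici le_rfl).mono_right Icc_subset_Ici_self) measurableSet_Icc]
  simp_rw [measure_setOf_max_mem_Icc μ hab]
  rw [lintegral_add_left (measurable_const.indicator measurableSet_Iio),
    lintegral_indicator_const measurableSet_Iio, lintegral_indicator_const measurableSet_Icc, hIic]
  ring

end LinearOrder

section Pker

variable {p q : ℝ}

theorem Pker_eq_min_max (hpq : ENNReal.ofReal p + ENNReal.ofReal q = 1) (x y : UnitInt) :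
    Pker p q x y
      = ENNReal.ofReal p • Measure.dirac (min x y)
        + ENNReal.ofReal q • Measure.dirac (max x y) := by
  rcases lt_trichotomy x y with hxy | rfl | hyx
  · simp [Pker, hxy, hxy.le]
  · simp [Pker, ← add_smul, hpq]
  · simp [Pker, hyx, hyx.le, hyx.not_gt, add_comm]

theorem lintegral_Pker_apply (hpq : ENNReal.ofReal p + ENNReal.ofReal q = 1)
    (μ : Measure UnitInt) (x : UnitInt) {A : Set UnitInt} (hA : MeasurableSet A) :
    ∫⁻ y, Pker p q x y A ∂μ
      = ENNReal.ofReal p * μ {y | min x y ∈ A} + ENNReal.ofReal q * μ {y | max x y ∈ A} := by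
  have hmin : MeasurableSet {y | min x y ∈ A} := (measurable_const.min measurable_id) hA
  have hmax : MeasurableSet {y | max x y ∈ A} := (measurable_const.max measurable_id) hA
  simp_rw [Pker_eq_min_max hpq, Measure.add_apply, Measure.smul_apply, smul_eq_mul,
    Measure.dirac_apply' _ hA]
  have hind (f : UnitInt → UnitInt) (y : UnitInt) :
      A.indicator (1 : UnitInt → ℝ≥0∞) (f y) = {y | f y ∈ A}.indicator 1 y := rfl
  simp_rw [hind (min x), hind (max x)]
  rw [lintegral_add_left ((measurable_one.indicator hmin).const_mul _),
    lintegral_const_mul _ (measurable_one.indicator hmin),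
    lintegral_const_mul _ (measurable_one.indicator hmax), lintegral_indicator_one hmin,
    lintegral_indicator_one hmax]

theorem lintegral_lintegral_Pker_Icc (hpq : ENNReal.ofReal p + ENNReal.ofReal q = 1)
    (μ : Measure UnitInt) {a b : UnitInt} (hab : a ≤ b) :
    ∫⁻ x, ∫⁻ y, Pker p q x y (Icc a b) ∂μ ∂μ
      = μ (Icc a b) * (μ (Icc a b) + 2 * ENNReal.ofReal q * μ (Iio a)
          + 2 * ENNReal.ofReal p * μ (Ioi b)) := by
  have hmeas : Measurable fun x => μ {y | min x y ∈ Icc a b} := by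
    simp_rw [measure_setOf_min_mem_Icc μ hab]
    exact (measurable_const.indicator measurableSet_Icc).add
      (measurable_const.indicator measurableSet_Ioi)
  simp_rw [lintegral_Pker_apply hpq μ _ measurableSet_Icc]
  rw [lintegral_add_left (hmeas.const_mul _), lintegral_const_mul' _ _ ofReal_ne_top,
    lintegral_const_mul' _ _ ofReal_ne_top, lintegral_measure_setOf_min_mem_Icc μ hab,
    lintegral_measure_setOf_max_mem_Icc μ hab]
  calc _ = (ENNReal.ofReal p + ENNReal.ofReal q) * (μ (Icc a b) * μ (Icc a b))
        + μ (Icc a b) * (2 * ENNReal.ofReal q * μ (Iio a) + 2 * ENNReal.ofReal p * μ (Ioi b)) := by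
        ring
    _ = _ := by rw [hpq, one_mul]; ring

end Pker

theorem V_interval_formula (p q : ℝ) (hp : 0 ≤ p) (hq : 0 ≤ q) (hpq : p + q = 1)
    (V : Measure UnitInt → Measure UnitInt)
    (hV : ∀ (μ : Measure UnitInt) (A : Set UnitInt), MeasurableSet A →
      V μ A = ∫⁻ x, ∫⁻ y, Pker p q x y A ∂μ ∂μ)
    (lam : Measure UnitInt)
    (a b : UnitInt) (hab : a ≤ b) :
    V lam (Set.Icc a b)
      = lam (Set.Icc a b) * (lam (Set.Icc a b)
          + ENNReal.ofReal (2*q) * lam (Set.Iio a)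
          + ENNReal.ofReal (2*p) * lam (Set.Ioi b)) := by
  have hpq' : ENNReal.ofReal p + ENNReal.ofReal q = 1 := by
    rw [← ofReal_add hp hq, hpq, ofReal_one]
  rw [hV lam _ measurableSet_Icc, lintegral_lintegral_Pker_Icc hpq' lam hab,
    ofReal_mul zero_le_two, ofReal_mul zero_le_two, ofReal_ofNat]
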